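/- arXiv:math/0605639 — 7 statements merged into one kernel-verified Lean document; each statement's English description precedes it below -/
import Mathlib

section
/- Let (Ω, F, P) be a probability space with a filtration φ_0 ⊆ φ_1 ⊆ ⋯ ⊆ φ_m of sub-σ-algebras of F. Let Y_1, …, Y_m be random variables taking values in {−1, 0, 1} with each Y_i measurable with respect to φ_i. Let E_0, E_1, …, E_{m−1} be events with each E_i ∈ φ_i, and let E = ⋂_{i=0}^{m−1} E_i. Let r_0 < r_1 be integers, let R_0 = r_0 (a constant), and for t = 1, …, m set R_t = r_0 + Σ_{i=1}^t Y_i. Let 0 ≤ p ≤ 1/3 and suppose that p·m ≥ 2(r_1 − r_0). Assume that for each i = 1, …, m: P(Y_i = 1 | φ_{i−1}) ≥ 2p almost everywhere on E_{i−1} ∩ {R_{i−1} < r_1}, and P(Y_i = −1 | φ_{i−1}) ≤ p almost everywhere on E_{i−1} ∩ {R_{i−1} < r_1}. Then P(E ∩ {R_t < r_1 for all t ∈ {1, …, m}}) ≤ exp(−p·m / 28). -/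
/-!
Put `θ = 1/7` and weight the walk by `exp (-θ R_t)`, killed as soon as some `E_i` fails or the
walk reaches `r₁`. Since `Y ∈ {-1, 0, 1}`,
`exp (-θ Y) = 1 + (e^{-θ} - 1) 𝟙{Y = 1} + (e^θ - 1) 𝟙{Y = -1}`, so while the walk survives the drift
hypotheses give `E[exp (-θ Y_{t+1}) | φ_t] ≤ 1 + κ ≤ e^κ` with
`κ = 2p (e^{-θ} - 1) + p (e^θ - 1) ≤ -3p/28`. Hence the expected weight after `m` steps is at most
`exp (mκ - θ r₀)`, whereas on the surviving event the weight is at least `exp (-θ r₁)`; Markov's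
inequality and `θ (r₁ - r₀) ≤ pm/14` finish.
-/

open MeasureTheory

section CondExp

variable {Ω : Type*} {m m0 : MeasurableSpace Ω} {μ : Measure Ω}

lemma exp_neg_mul_eq_indicator {Y : Ω → ℤ} (hY : ∀ ω, Y ω ∈ ({-1, 0, 1} : Set ℤ)) (θ : ℝ) :
    (fun ω => Real.exp (-θ * Y ω)) =
      (fun _ => (1 : ℝ)) + (Real.exp (-θ) - 1) • {ω | Y ω = 1}.indicator (fun _ => (1 : ℝ))
        + (Real.exp θ - 1) • {ω | Y ω = -1}.indicator (fun _ => (1 : ℝ)) := by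
  funext ω
  obtain h | h | h : Y ω = -1 ∨ Y ω = 0 ∨ Y ω = 1 := by simpa using hY ω
  all_goals simp [h]

noncomputable def expDrift (θ a b : ℝ) : ℝ :=
  (Real.exp (-θ) - 1) * a + (Real.exp θ - 1) * b

lemma condExp_exp_neg_mul_le [IsFiniteMeasure μ] (hm : m ≤ m0) {Y : Ω → ℤ} (hY : Measurable Y)
    (hY_range : ∀ ω, Y ω ∈ ({-1, 0, 1} : Set ℤ)) {θ a b : ℝ} (hθ : 0 ≤ θ) {S : Set Ω}
    (ha : ∀ᵐ ω ∂μ, ω ∈ S → a ≤ μ[{ω' | Y ω' = 1}.indicator (fun _ => (1 : ℝ)) | m] ω)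
    (hb : ∀ᵐ ω ∂μ, ω ∈ S → μ[{ω' | Y ω' = -1}.indicator (fun _ => (1 : ℝ)) | m] ω ≤ b) :
    ∀ᵐ ω ∂μ, ω ∈ S → μ[fun ω => Real.exp (-θ * Y ω) | m] ω ≤ 1 + expDrift θ a b := by
  have hdecomp := exp_neg_mul_eq_indicator hY_range θ
  set I₁ := {ω' | Y ω' = 1}.indicator (fun _ => (1 : ℝ))
  set I₂ := {ω' | Y ω' = -1}.indicator (fun _ => (1 : ℝ))
  set c₁ := Real.exp (-θ) - 1
  set c₂ := Real.exp θ - 1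
  have hI₁ : Integrable I₁ μ := (integrable_const 1).indicator (hY (measurableSet_singleton 1))
  have hI₂ : Integrable I₂ μ := (integrable_const 1).indicator (hY (measurableSet_singleton (-1)))
  have hlin : μ[fun ω => Real.exp (-θ * Y ω) | m] =ᵐ[μ]
      (fun _ => 1) + c₁ • μ[I₁ | m] + c₂ • μ[I₂ | m] := by
    rw [hdecomp]
    have h_one : μ[fun _ => (1 : ℝ) | m] = fun _ => 1 := condExp_const hm (1 : ℝ)
    filter_upwards [condExp_add ((integrable_const 1).add (hI₁.smul c₁)) (hI₂.smul c₂) m,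
      condExp_add (integrable_const 1) (hI₁.smul c₁) m, condExp_smul c₁ I₁ m,
      condExp_smul c₂ I₂ m] with ω h₁ h₂ h₃ h₄
    simp only [Pi.add_apply, h₁, h₂, h₃, h₄, h_one]
  have hc₁ : c₁ ≤ 0 := by simp only [c₁]; linarith [Real.exp_le_one_iff.mpr (neg_nonpos.mpr hθ)]
  have hc₂ : 0 ≤ c₂ := by simp only [c₂]; linarith [Real.one_le_exp hθ]
  filter_upwards [hlin, ha, hb] with ω hω ha hb hS
  rw [hω]
  simp only [Pi.add_apply, Pi.smul_apply, smul_eq_mul, expDrift]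
  linarith [mul_le_mul_of_nonpos_left (ha hS) hc₁, mul_le_mul_of_nonneg_left (hb hS) hc₂]

lemma integral_mul_le_of_condExp_le [IsFiniteMeasure μ] (hm : m ≤ m0) {g h : Ω → ℝ} {S : Set Ω}
    {ρ : ℝ} (hg : StronglyMeasurable[m] g) (hg_nonneg : 0 ≤ g) (hg_int : Integrable g μ)
    (hgS : ∀ ω ∉ S, g ω = 0) (hh : Integrable h μ) (hgh : Integrable (g * h) μ)
    (hbound : ∀ᵐ ω ∂μ, ω ∈ S → μ[h | m] ω ≤ ρ) :
    ∫ ω, g ω * h ω ∂μ ≤ ρ * ∫ ω, g ω ∂μ := by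
  have hpull : μ[g * h | m] =ᵐ[μ] g * μ[h | m] := condExp_mul_of_stronglyMeasurable_left hg hgh hh
  calc ∫ ω, g ω * h ω ∂μ = ∫ ω, μ[g * h | m] ω ∂μ := (integral_condExp hm).symm
    _ = ∫ ω, g ω * μ[h | m] ω ∂μ := integral_congr_ae hpull
    _ ≤ ∫ ω, ρ * g ω ∂μ := by
      refine integral_mono_ae (integrable_condExp.congr hpull) (hg_int.const_mul ρ) ?_
      filter_upwards [hbound] with ω hω
      by_cases hS : ω ∈ S
      · rw [mul_comm ρ]
        exact mul_le_mul_of_nonneg_left (hω hS) (hg_nonneg ω)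
      · simp [hgS ω hS]
    _ = ρ * ∫ ω, g ω ∂μ := integral_const_mul ρ _

end CondExp

section Walk

variable {Ω : Type*} {mΩ : MeasurableSpace Ω}

def survivalSet (E : ℕ → Set Ω) (R : ℕ → Ω → ℤ) (r1 : ℤ) (t : ℕ) : Set Ω :=
  (⋂ i ∈ Finset.range t, E i) ∩ {ω | ∀ s, 1 ≤ s → s ≤ t → R s ω < r1}

noncomputable def survivalWeight (θ : ℝ) (E : ℕ → Set Ω) (R : ℕ → Ω → ℤ) (r1 : ℤ) (t : ℕ) :
    Ω → ℝ :=
  (survivalSet E R r1 t).indicator fun ω => Real.exp (-θ * R t ω)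

variable {E : ℕ → Set Ω} {R : ℕ → Ω → ℤ} {Y : ℕ → Ω → ℤ} {r0 r1 : ℤ} {θ : ℝ}

lemma survivalSet_succ_subset (t : ℕ) :
    survivalSet E R r1 (t + 1) ⊆ E t ∩ survivalSet E R r1 t := by
  intro ω ⟨hE, hR⟩
  simp only [Set.mem_iInter, Finset.mem_range] at hE
  exact ⟨hE t (by omega), Set.mem_iInter₂.mpr fun i hi => hE i (by simp at hi; omega),
    fun s hs₁ hs₂ => hR s hs₁ (by omega)⟩

lemma lt_of_mem_survivalSet (hR0 : ∀ ω, R 0 ω = r0) (hr : r0 < r1) {t : ℕ} {ω : Ω}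
    (h : ω ∈ survivalSet E R r1 t) : R t ω < r1 := by
  rcases Nat.eq_zero_or_pos t with rfl | ht
  · rwa [hR0]
  · exact h.2 t ht le_rfl

lemma measurableSet_survivalSet (𝓕 : Filtration ℕ mΩ) (hE : ∀ i, MeasurableSet[𝓕 i] (E i))
    (hR : ∀ t, Measurable[𝓕 t] (R t)) (t : ℕ) : MeasurableSet[𝓕 t] (survivalSet E R r1 t) := by
  refine .inter (.biInter (Set.to_countable _) fun i hi => 𝓕.mono ?_ _ (hE i)) ?_
  · simp only [Finset.coe_range, Set.mem_Iio] at hi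
    omega
  · have : {ω | ∀ s, 1 ≤ s → s ≤ t → R s ω < r1} = ⋂ s ∈ Finset.Icc 1 t, {ω | R s ω < r1} := by
      ext ω; simp [Finset.mem_Icc]
    rw [this]
    refine .biInter (Set.to_countable _) fun s hs => ?_
    exact (hR s).mono (𝓕.mono (Finset.mem_Icc.mp hs).2) le_rfl measurableSet_Iio

lemma neg_one_le_of_mem {y : ℤ} (hy : y ∈ ({-1, 0, 1} : Set ℤ)) : -1 ≤ y := by
  obtain rfl | rfl | rfl := hy <;> decide

lemma sub_le_of_increment_ge (hR0 : ∀ ω, R 0 ω = r0)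
    (hR_succ : ∀ t ω, R (t + 1) ω = R t ω + Y (t + 1) ω) (hY : ∀ i ω, -1 ≤ Y i ω) (t : ℕ) (ω : Ω) :
    r0 - t ≤ R t ω := by
  induction t with
  | zero => simp [hR0]
  | succ t ih => rw [hR_succ]; have := hY (t + 1) ω; push_cast; omega

lemma survivalWeight_nonneg (t : ℕ) : 0 ≤ survivalWeight θ E R r1 t :=
  Set.indicator_nonneg (fun _ _ => (Real.exp_pos _).le)

lemma survivalWeight_le (hθ : 0 ≤ θ) (hR0 : ∀ ω, R 0 ω = r0)
    (hR_succ : ∀ t ω, R (t + 1) ω = R t ω + Y (t + 1) ω) (hY : ∀ i ω, -1 ≤ Y i ω) (t : ℕ) (ω : Ω) :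
    survivalWeight θ E R r1 t ω ≤ Real.exp (θ * (t - r0)) := by
  have hlow : ((r0 - t : ℤ) : ℝ) ≤ R t ω := by
    exact_mod_cast sub_le_of_increment_ge hR0 hR_succ hY t ω
  push_cast at hlow
  by_cases h : ω ∈ survivalSet E R r1 t
  · rw [survivalWeight, Set.indicator_of_mem h]
    exact Real.exp_le_exp.mpr (by nlinarith)
  · rw [survivalWeight, Set.indicator_of_notMem h]
    exact (Real.exp_pos _).le

lemma stronglyMeasurable_survivalWeight (𝓕 : Filtration ℕ mΩ)
    (hE : ∀ i, MeasurableSet[𝓕 i] (E i)) (hR : ∀ t, Measurable[𝓕 t] (R t)) (t : ℕ) :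
    StronglyMeasurable[𝓕 t] (survivalWeight θ E R r1 t) :=
  (((measurable_from_top.comp (hR t)).const_mul (-θ)).exp.indicator
    (measurableSet_survivalSet 𝓕 hE hR t)).stronglyMeasurable

lemma integrable_survivalWeight {P : Measure Ω} [IsFiniteMeasure P] (𝓕 : Filtration ℕ mΩ)
    (hE : ∀ i, MeasurableSet[𝓕 i] (E i)) (hR : ∀ t, Measurable[𝓕 t] (R t)) (hθ : 0 ≤ θ)
    (hR0 : ∀ ω, R 0 ω = r0) (hR_succ : ∀ t ω, R (t + 1) ω = R t ω + Y (t + 1) ω)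
    (hY : ∀ i ω, -1 ≤ Y i ω) (t : ℕ) : Integrable (survivalWeight θ E R r1 t) P := by
  refine .of_bound
    ((stronglyMeasurable_survivalWeight 𝓕 hE hR t).mono (𝓕.le t)).aestronglyMeasurable
    (Real.exp (θ * (t - r0))) (ae_of_all _ fun ω => ?_)
  rw [Real.norm_of_nonneg (survivalWeight_nonneg t ω)]
  exact survivalWeight_le hθ hR0 hR_succ hY t ω

lemma survivalWeight_succ_le (hR_succ : ∀ t ω, R (t + 1) ω = R t ω + Y (t + 1) ω) (t : ℕ)
    (ω : Ω) : survivalWeight θ E R r1 (t + 1) ω ≤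
      (E t).indicator (survivalWeight θ E R r1 t) ω * Real.exp (-θ * Y (t + 1) ω) := by
  by_cases h : ω ∈ survivalSet E R r1 (t + 1)
  · obtain ⟨hE, hA⟩ := survivalSet_succ_subset t h
    rw [survivalWeight, Set.indicator_of_mem h, Set.indicator_of_mem hE, survivalWeight,
      Set.indicator_of_mem hA, ← Real.exp_add, hR_succ, Int.cast_add, mul_add]
  · rw [survivalWeight, Set.indicator_of_notMem h]
    exact mul_nonneg (Set.indicator_nonneg (fun _ _ => survivalWeight_nonneg t _) ω)
      (Real.exp_pos _).le

lemma indicator_survivalWeight_eq_zero (hR0 : ∀ ω, R 0 ω = r0) (hr : r0 < r1) {t : ℕ} {ω : Ω}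
    (hω : ω ∉ E t ∩ {ω | R t ω < r1}) : (E t).indicator (survivalWeight θ E R r1 t) ω = 0 := by
  by_cases hEt : ω ∈ E t
  · have hA : ω ∉ survivalSet E R r1 t := fun hA => hω ⟨hEt, lt_of_mem_survivalSet hR0 hr hA⟩
    rw [Set.indicator_of_mem hEt, survivalWeight, Set.indicator_of_notMem hA]
  · exact Set.indicator_of_notMem hEt _

lemma norm_exp_neg_mul_le (hθ : 0 ≤ θ) {y : ℤ} (hy : -1 ≤ y) :
    ‖Real.exp (-θ * y)‖ ≤ Real.exp θ := by
  rw [Real.norm_of_nonneg (Real.exp_pos _).le, Real.exp_le_exp]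
  have : (-1 : ℝ) ≤ y := by exact_mod_cast hy
  nlinarith

variable {P : Measure Ω} {a b : ℝ}

lemma integral_survivalWeight_succ_le [IsFiniteMeasure P] (𝓕 : Filtration ℕ mΩ)
    (hY_range : ∀ i ω, Y i ω ∈ ({-1, 0, 1} : Set ℤ)) (hY_meas : ∀ i, Measurable (Y i))
    (hE : ∀ i, MeasurableSet[𝓕 i] (E i)) (hR : ∀ t, Measurable[𝓕 t] (R t))
    (hR0 : ∀ ω, R 0 ω = r0) (hR_succ : ∀ t ω, R (t + 1) ω = R t ω + Y (t + 1) ω) (hr : r0 < r1)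
    (hθ : 0 ≤ θ) (t : ℕ)
    (hup : ∀ᵐ ω ∂P, (ω ∈ E t ∧ R t ω < r1) →
      a ≤ P[{ω' | Y (t + 1) ω' = 1}.indicator (fun _ => (1 : ℝ)) | 𝓕 t] ω)
    (hdown : ∀ᵐ ω ∂P, (ω ∈ E t ∧ R t ω < r1) →
      P[{ω' | Y (t + 1) ω' = -1}.indicator (fun _ => (1 : ℝ)) | 𝓕 t] ω ≤ b) :
    ∫ ω, survivalWeight θ E R r1 (t + 1) ω ∂P ≤
      Real.exp (expDrift θ a b) * ∫ ω, survivalWeight θ E R r1 t ω ∂P := by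
  have hY : ∀ i ω, -1 ≤ Y i ω := fun i ω => neg_one_le_of_mem (hY_range i ω)
  have hw_int := integrable_survivalWeight (P := P) (r1 := r1) 𝓕 hE hR hθ hR0 hR_succ hY
  set g := (E t).indicator (survivalWeight θ E R r1 t)
  set h := fun ω => Real.exp (-θ * Y (t + 1) ω)
  have hg_int : Integrable g P := (hw_int t).indicator (𝓕.le t _ (hE t))
  have hh_meas : Measurable h := ((measurable_from_top.comp (hY_meas (t + 1))).const_mul _).exp
  have hh_le : ∀ᵐ ω ∂P, ‖h ω‖ ≤ Real.exp θ := ae_of_all _ fun ω => norm_exp_neg_mul_le hθ (hY _ ω)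
  have hgh_int : Integrable (g * h) P := hg_int.mul_bdd hh_meas.aestronglyMeasurable hh_le
  have hbound := condExp_exp_neg_mul_le (𝓕.le t) (hY_meas (t + 1)) (hY_range (t + 1)) hθ hup hdown
  calc ∫ ω, survivalWeight θ E R r1 (t + 1) ω ∂P ≤ ∫ ω, g ω * h ω ∂P :=
        integral_mono (hw_int (t + 1)) hgh_int (survivalWeight_succ_le hR_succ t)
    _ ≤ Real.exp (expDrift θ a b) * ∫ ω, g ω ∂P := by
      refine integral_mul_le_of_condExp_le (𝓕.le t)
        ((stronglyMeasurable_survivalWeight 𝓕 hE hR t).indicator (hE t))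
        (Set.indicator_nonneg fun _ _ => survivalWeight_nonneg t _) hg_int
        (fun _ => indicator_survivalWeight_eq_zero hR0 hr)
        (.of_bound hh_meas.aestronglyMeasurable _ hh_le)
        hgh_int ?_
      filter_upwards [hbound] with ω hω hS
      linarith [hω hS, Real.add_one_le_exp (expDrift θ a b)]
    _ ≤ Real.exp (expDrift θ a b) * ∫ ω, survivalWeight θ E R r1 t ω ∂P :=
      mul_le_mul_of_nonneg_left (integral_mono hg_int (hw_int t)
        (Set.indicator_le_self' fun _ _ => survivalWeight_nonneg t _)) (Real.exp_pos _).le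

lemma integral_survivalWeight_le [IsProbabilityMeasure P] (𝓕 : Filtration ℕ mΩ)
    (hY_range : ∀ i ω, Y i ω ∈ ({-1, 0, 1} : Set ℤ)) (hY_meas : ∀ i, Measurable (Y i))
    (hE : ∀ i, MeasurableSet[𝓕 i] (E i)) (hR : ∀ t, Measurable[𝓕 t] (R t))
    (hR0 : ∀ ω, R 0 ω = r0) (hR_succ : ∀ t ω, R (t + 1) ω = R t ω + Y (t + 1) ω) (hr : r0 < r1)
    (hθ : 0 ≤ θ) {m : ℕ}
    (hup : ∀ t < m, ∀ᵐ ω ∂P, (ω ∈ E t ∧ R t ω < r1) →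
      a ≤ P[{ω' | Y (t + 1) ω' = 1}.indicator (fun _ => (1 : ℝ)) | 𝓕 t] ω)
    (hdown : ∀ t < m, ∀ᵐ ω ∂P, (ω ∈ E t ∧ R t ω < r1) →
      P[{ω' | Y (t + 1) ω' = -1}.indicator (fun _ => (1 : ℝ)) | 𝓕 t] ω ≤ b) :
    ∀ t ≤ m, ∫ ω, survivalWeight θ E R r1 t ω ∂P ≤ Real.exp (t * expDrift θ a b - θ * r0) := by
  intro t ht
  induction t with
  | zero =>
    have hY : ∀ i ω, -1 ≤ Y i ω := fun i ω => neg_one_le_of_mem (hY_range i ω)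
    calc _ ≤ ∫ _, Real.exp (θ * ((0 : ℕ) - r0)) ∂P :=
          integral_mono (integrable_survivalWeight 𝓕 hE hR hθ hR0 hR_succ hY 0)
            (integrable_const _) (survivalWeight_le hθ hR0 hR_succ hY 0)
      _ = _ := by simp
  | succ t ih =>
    calc _ ≤ Real.exp (expDrift θ a b) * ∫ ω, survivalWeight θ E R r1 t ω ∂P :=
          integral_survivalWeight_succ_le 𝓕 hY_range hY_meas hE hR hR0 hR_succ hr hθ t
            (hup t ht) (hdown t ht)
      _ ≤ Real.exp (expDrift θ a b) * Real.exp (t * expDrift θ a b - θ * r0) := by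
          gcongr
          exact ih (by omega)
      _ = _ := by rw [← Real.exp_add]; push_cast; ring_nf

lemma measureReal_survivalSet_mul_exp_le [IsFiniteMeasure P] (𝓕 : Filtration ℕ mΩ)
    (hY : ∀ i ω, -1 ≤ Y i ω) (hE : ∀ i, MeasurableSet[𝓕 i] (E i))
    (hR : ∀ t, Measurable[𝓕 t] (R t)) (hR0 : ∀ ω, R 0 ω = r0)
    (hR_succ : ∀ t ω, R (t + 1) ω = R t ω + Y (t + 1) ω) (hr : r0 < r1) (hθ : 0 ≤ θ) (t : ℕ) :
    P.real (survivalSet E R r1 t) * Real.exp (-θ * r1) ≤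
      ∫ ω, survivalWeight θ E R r1 t ω ∂P := by
  have hA := 𝓕.le t _ (measurableSet_survivalSet (r1 := r1) 𝓕 hE hR t)
  rw [← smul_eq_mul, ← integral_indicator_const _ hA]
  refine integral_mono ((integrable_const _).indicator hA)
    (integrable_survivalWeight 𝓕 hE hR hθ hR0 hR_succ hY t) fun ω => ?_
  by_cases h : ω ∈ survivalSet E R r1 t
  · rw [Set.indicator_of_mem h, survivalWeight, Set.indicator_of_mem h, Real.exp_le_exp]
    have : (R t ω : ℝ) ≤ r1 := by exact_mod_cast (lt_of_mem_survivalSet hR0 hr h).le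
    nlinarith
  · rw [Set.indicator_of_notMem h]
    exact survivalWeight_nonneg t ω

lemma measure_survivalSet_le [IsProbabilityMeasure P] (𝓕 : Filtration ℕ mΩ)
    (hY_range : ∀ i ω, Y i ω ∈ ({-1, 0, 1} : Set ℤ)) (hY_meas : ∀ i, Measurable (Y i))
    (hE : ∀ i, MeasurableSet[𝓕 i] (E i)) (hR : ∀ t, Measurable[𝓕 t] (R t))
    (hR0 : ∀ ω, R 0 ω = r0) (hR_succ : ∀ t ω, R (t + 1) ω = R t ω + Y (t + 1) ω) (hr : r0 < r1)
    (hθ : 0 ≤ θ) {m : ℕ}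
    (hup : ∀ t < m, ∀ᵐ ω ∂P, (ω ∈ E t ∧ R t ω < r1) →
      a ≤ P[{ω' | Y (t + 1) ω' = 1}.indicator (fun _ => (1 : ℝ)) | 𝓕 t] ω)
    (hdown : ∀ t < m, ∀ᵐ ω ∂P, (ω ∈ E t ∧ R t ω < r1) →
      P[{ω' | Y (t + 1) ω' = -1}.indicator (fun _ => (1 : ℝ)) | 𝓕 t] ω ≤ b) :
    P (survivalSet E R r1 m) ≤ ENNReal.ofReal (Real.exp (θ * (r1 - r0) + m * expDrift θ a b)) := by
  have h := (measureReal_survivalSet_mul_exp_le 𝓕 (fun i ω => neg_one_le_of_mem (hY_range i ω))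
    hE hR hR0 hR_succ hr hθ m).trans
    (integral_survivalWeight_le 𝓕 hY_range hY_meas hE hR hR0 hR_succ hr hθ hup hdown m le_rfl)
  rw [← le_div_iff₀ (Real.exp_pos _), ← Real.exp_sub] at h
  rw [← ofReal_measureReal]
  refine ENNReal.ofReal_le_ofReal (h.trans_eq ?_)
  congr 1
  ring

end Walk

lemma two_mul_exp_neg_add_exp_le : 2 * Real.exp (-(1 / 7)) + Real.exp (1 / 7) ≤ 81 / 28 := by
  have h₁ := Real.exp_bound (x := 1 / 7) (by rw [abs_of_nonneg] <;> norm_num) (n := 4) (by norm_num)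
  have h₂ := Real.exp_bound (x := -(1 / 7)) (by rw [abs_of_nonpos] <;> norm_num) (n := 4)
    (by norm_num)
  rw [abs_le] at h₁ h₂
  simp only [Finset.sum_range_succ, Finset.sum_range_zero] at h₁ h₂
  norm_num [Nat.factorial] at h₁ h₂ ⊢
  linarith [h₁.1, h₁.2, h₂.1, h₂.2]

lemma expDrift_le {p : ℝ} (hp : 0 ≤ p) : expDrift (1 / 7) (2 * p) p ≤ -(3 / 28) * p := by
  unfold expDrift
  nlinarith [two_mul_exp_neg_add_exp_le]

theorem drift_walk_hits_r1_general
    {Ω : Type*} {F : MeasurableSpace Ω} (P : Measure Ω) [IsProbabilityMeasure P]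
    (m : ℕ)
    (φ : ℕ → MeasurableSpace Ω) (hφ_mono : Monotone φ) (hφ_le : ∀ i, φ i ≤ F)
    (Y : ℕ → Ω → ℤ) (hY_range : ∀ i ω, Y i ω ∈ ({-1, 0, 1} : Set ℤ))
    (hY_meas : ∀ i, Measurable[φ i] (Y i))
    (E : ℕ → Set Ω) (hE : ∀ i, MeasurableSet[φ i] (E i))
    (r0 r1 : ℤ) (hr : r0 < r1)
    (R : ℕ → Ω → ℤ)
    (hR : ∀ t ω, R t ω = r0 + ∑ i ∈ Finset.Icc 1 t, Y i ω)
    (p : ℝ) (hp0 : 0 ≤ p)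
    (hpm : 2 * ((r1 : ℝ) - r0) ≤ p * m)
    (hup : ∀ i : ℕ, 1 ≤ i → i ≤ m →
      ∀ᵐ ω ∂P, (ω ∈ E (i - 1) ∧ R (i - 1) ω < r1) →
        2 * p ≤ (P[Set.indicator {ω' | Y i ω' = 1} (fun _ => (1 : ℝ)) | φ (i - 1)]) ω)
    (hdown : ∀ i : ℕ, 1 ≤ i → i ≤ m →
      ∀ᵐ ω ∂P, (ω ∈ E (i - 1) ∧ R (i - 1) ω < r1) →
        (P[Set.indicator {ω' | Y i ω' = -1} (fun _ => (1 : ℝ)) | φ (i - 1)]) ω ≤ p) :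
    P ((⋂ i ∈ Finset.range m, E i) ∩ {ω | ∀ t, 1 ≤ t → t ≤ m → R t ω < r1})
      ≤ ENNReal.ofReal (Real.exp (-(p * m) / 28)) := by
  have hR0 : ∀ ω, R 0 ω = r0 := fun ω => by simp [hR]
  have hR_succ : ∀ t ω, R (t + 1) ω = R t ω + Y (t + 1) ω := fun t ω => by
    rw [hR, hR, Finset.sum_Icc_succ_top (by omega), add_assoc]
  have hR_meas : ∀ t, Measurable[φ t] (R t) := fun t => by
    rw [show R t = fun ω => r0 + ∑ i ∈ Finset.Icc 1 t, Y i ω from funext (hR t)]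
    exact measurable_const.add (Finset.measurable_sum _ fun i hi =>
      (hY_meas i).mono (hφ_mono (Finset.mem_Icc.mp hi).2) le_rfl)
  have hsurv := measure_survivalSet_le (P := P) (θ := 1 / 7) (a := 2 * p) (b := p)
    ⟨φ, hφ_mono, hφ_le⟩ hY_range (fun i => (hY_meas i).mono (hφ_le i) le_rfl) hE hR_meas hR0
    hR_succ hr (by norm_num) (m := m)
    (fun t _ => by simpa using hup (t + 1) (by omega) (by omega))
    (fun t _ => by simpa using hdown (t + 1) (by omega) (by omega))
  refine hsurv.trans (ENNReal.ofReal_le_ofReal (Real.exp_le_exp.mpr ?_))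
  have hdrift := mul_le_mul_of_nonneg_left (expDrift_le hp0) m.cast_nonneg
  nlinarith

theorem drift_walk_hits_r1
    {Ω : Type*} {F : MeasurableSpace Ω} (P : Measure Ω) [IsProbabilityMeasure P]
    (m : ℕ)
    (φ : ℕ → MeasurableSpace Ω) (hφ_mono : Monotone φ) (hφ_le : ∀ i, φ i ≤ F)
    (Y : ℕ → Ω → ℤ) (hY_range : ∀ i ω, Y i ω ∈ ({-1, 0, 1} : Set ℤ))
    (hY_meas : ∀ i, Measurable[φ i] (Y i))
    (E : ℕ → Set Ω) (hE : ∀ i, MeasurableSet[φ i] (E i))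
    (r0 r1 : ℤ) (hr : r0 < r1)
    (R : ℕ → Ω → ℤ)
    (hR : ∀ t ω, R t ω = r0 + ∑ i ∈ Finset.Icc 1 t, Y i ω)
    (p : ℝ) (hp0 : 0 ≤ p) (hp3 : p ≤ 1 / 3)
    (hpm : 2 * ((r1 : ℝ) - r0) ≤ p * m)
    (hup : ∀ i : ℕ, 1 ≤ i → i ≤ m →
      ∀ᵐ ω ∂P, (ω ∈ E (i - 1) ∧ R (i - 1) ω < r1) →
        2 * p ≤ (P[Set.indicator {ω' | Y i ω' = 1} (fun _ => (1 : ℝ)) | φ (i - 1)]) ω)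
    (hdown : ∀ i : ℕ, 1 ≤ i → i ≤ m →
      ∀ᵐ ω ∂P, (ω ∈ E (i - 1) ∧ R (i - 1) ω < r1) →
        (P[Set.indicator {ω' | Y i ω' = -1} (fun _ => (1 : ℝ)) | φ (i - 1)]) ω ≤ p) :
    P ((⋂ i ∈ Finset.range m, E i) ∩ {ω | ∀ t, 1 ≤ t → t ≤ m → R t ω < r1})
      ≤ ENNReal.ofReal (Real.exp (-(p * m) / 28)) :=
  drift_walk_hits_r1_general P m φ hφ_mono hφ_le Y hY_range hY_meas E hE r0 r1 hr R hR p hp0 hpm hup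
    hdown
end

section
/- Let (Ω, F, P) be a probability space with a filtration φ_0 ⊆ φ_1 ⊆ φ_2 ⊆ ⋯ of sub-σ-algebras of F. Let a be a positive integer, and let p, q be reals with q > p ≥ 0 and p + q ≤ 1. Let Y_1, Y_2, … be random variables taking values in {−1, 0, 1} with each Y_i measurable with respect to φ_i. Let E_0, E_1, … be events with each E_i ∈ φ_i, and let E = ⋂_{i≥0} E_i. Set R_0 = 0 and R_k = Σ_{i=1}^k Y_i for k ≥ 1. Assume that for each i ≥ 1: P(Y_i = 1 | φ_{i−1}) ≤ p almost everywhere on E_{i−1} ∩ {0 ≤ R_{i−1} ≤ a − 1}, and P(Y_i = −1 | φ_{i−1}) ≥ q almost everywhere on E_{i−1} ∩ {0 ≤ R_{i−1} ≤ a − 1}. Let H be the event that the walk reaches a before −1, i.e., that there exists k ≥ 1 with R_k = a and R_j ∉ {−1, a} for all 1 ≤ j < k. Then P(E ∩ H) ≤ (p/q)^a. -/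
/-!
For `t ≥ 1` with `p * t ≤ q`, the weight `t ^ R k`, killed as soon as some `E i` fails or the
walk leaves `[0, a - 1]`, is a supermartingale: before killing,
`E[t ^ Y (k+1) | φ k] ≤ 1 + (t - 1) p + (t⁻¹ - 1) q = 1 + (t - 1)(p t - q) / t ≤ 1`.
A path of `(⋂ i, E i) ∩ H` is killed by stepping onto `a`, where its weight is `t ^ a`, and the
weight starts at `t ^ 0 = 1`; hence `t ^ a * P((⋂ i, E i) ∩ H) ≤ 1`. Take `t = q / p'` and let
`p' ↓ p` (which also covers `p = 0`).
-/

open MeasureTheory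

section CondExpIndicator

variable {Ω : Type*} {m m0 : MeasurableSpace Ω} {μ : Measure Ω} {A : Set Ω} {h : Ω → ℝ}

theorem MeasureTheory.Integrable.mul_indicator_one (hint : Integrable h μ) (hA : MeasurableSet A) :
    Integrable (fun ω => h ω * A.indicator (fun _ => (1 : ℝ)) ω) μ :=
  (hint.indicator hA).congr (ae_of_all _ fun ω => by by_cases hω : ω ∈ A <;> simp [hω])

variable [IsFiniteMeasure μ]

theorem condExp_mul_indicator_ae_eq (hA : MeasurableSet A) (hh : StronglyMeasurable[m] h)
    (hint : Integrable h μ) :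
    μ[fun ω => h ω * A.indicator (fun _ => (1 : ℝ)) ω | m]
      =ᵐ[μ] fun ω => h ω * μ[A.indicator (fun _ => (1 : ℝ)) | m] ω :=
  condExp_mul_of_stronglyMeasurable_left hh (hint.mul_indicator_one hA)
    ((integrable_const 1).indicator hA)

theorem integrable_mul_condExp_indicator (hA : MeasurableSet A) (hh : StronglyMeasurable[m] h)
    (hint : Integrable h μ) :
    Integrable (fun ω => h ω * μ[A.indicator (fun _ => (1 : ℝ)) | m] ω) μ :=
  integrable_condExp.congr (condExp_mul_indicator_ae_eq hA hh hint)

theorem integral_mul_condExp_indicator (hm : m ≤ m0) (hA : MeasurableSet A)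
    (hh : StronglyMeasurable[m] h) (hint : Integrable h μ) :
    ∫ ω, h ω * μ[A.indicator (fun _ => (1 : ℝ)) | m] ω ∂μ
      = ∫ ω, h ω * A.indicator (fun _ => (1 : ℝ)) ω ∂μ := by
  rw [← integral_congr_ae (condExp_mul_indicator_ae_eq hA hh hint), integral_condExp hm]

theorem integral_mul_indicator_le_of_condExp_le (hm : m ≤ m0) (hA : MeasurableSet A)
    (hh : StronglyMeasurable[m] h) (hint : Integrable h μ) (hh0 : ∀ ω, 0 ≤ h ω) {c : ℝ}
    (hc : ∀ᵐ ω ∂μ, h ω ≠ 0 → μ[A.indicator (fun _ => (1 : ℝ)) | m] ω ≤ c) :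
    ∫ ω, h ω * A.indicator (fun _ => (1 : ℝ)) ω ∂μ ≤ c * ∫ ω, h ω ∂μ := by
  rw [← integral_mul_condExp_indicator hm hA hh hint, ← integral_const_mul]
  refine integral_mono_ae (integrable_mul_condExp_indicator hA hh hint) (hint.const_mul c) ?_
  filter_upwards [hc] with ω hω
  rcases eq_or_ne (h ω) 0 with h0 | h0
  · simp [h0]
  · rw [mul_comm c]
    exact mul_le_mul_of_nonneg_left (hω h0) (hh0 ω)

theorem le_integral_mul_indicator_of_le_condExp (hm : m ≤ m0) (hA : MeasurableSet A)
    (hh : StronglyMeasurable[m] h) (hint : Integrable h μ) (hh0 : ∀ ω, 0 ≤ h ω) {c : ℝ}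
    (hc : ∀ᵐ ω ∂μ, h ω ≠ 0 → c ≤ μ[A.indicator (fun _ => (1 : ℝ)) | m] ω) :
    c * ∫ ω, h ω ∂μ ≤ ∫ ω, h ω * A.indicator (fun _ => (1 : ℝ)) ω ∂μ := by
  rw [← integral_mul_condExp_indicator hm hA hh hint, ← integral_const_mul]
  refine integral_mono_ae (hint.const_mul c) (integrable_mul_condExp_indicator hA hh hint) ?_
  filter_upwards [hc] with ω hω
  rcases eq_or_ne (h ω) 0 with h0 | h0
  · simp [h0]
  · rw [mul_comm c]
    exact mul_le_mul_of_nonneg_left (hω h0) (hh0 ω)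

end CondExpIndicator

theorem zpow_eq_of_mem_neg_one_zero_one (t : ℝ) {y : ℤ}
    (hy : y ∈ ({-1, 0, 1} : Set ℤ)) :
    t ^ y = 1 + (t - 1) * (if y = 1 then 1 else 0) + (t⁻¹ - 1) * (if y = -1 then 1 else 0) := by
  rcases hy with rfl | rfl | rfl <;> simp

theorem norm_zpow_le_of_mem_neg_one_zero_one {t : ℝ} (ht : 1 ≤ t) {y : ℤ}
    (hy : y ∈ ({-1, 0, 1} : Set ℤ)) : ‖t ^ y‖ ≤ t := by
  rw [Real.norm_of_nonneg (zpow_nonneg (zero_le_one.trans ht) y)]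
  calc t ^ y ≤ t ^ (1 : ℤ) := zpow_le_zpow_right₀ ht (by rcases hy with rfl | rfl | rfl <;> decide)
    _ = t := zpow_one t

theorem sub_one_mul_add_inv_sub_one_mul_nonpos {p q t : ℝ} (ht : 1 ≤ t) (hpt : p * t ≤ q) :
    (t - 1) * p + (t⁻¹ - 1) * q ≤ 0 := by
  have ht0 : 0 < t := zero_lt_one.trans_le ht
  have : (t - 1) * p + (t⁻¹ - 1) * q = (t - 1) * (p * t - q) / t := by field_simp; ring
  rw [this]
  exact div_nonpos_of_nonpos_of_nonneg
    (mul_nonpos_of_nonneg_of_nonpos (by linarith) (by linarith)) ht0.le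

theorem integral_mul_zpow_le_integral {Ω : Type*} {m m0 : MeasurableSpace Ω} {μ : Measure Ω}
    [IsFiniteMeasure μ] (hm : m ≤ m0) {X : Ω → ℤ} (hX : ∀ ω, X ω ∈ ({-1, 0, 1} : Set ℤ))
    (hXm : Measurable X) {h : Ω → ℝ} (hh : StronglyMeasurable[m] h) (hint : Integrable h μ)
    (hh0 : ∀ ω, 0 ≤ h ω) {p q t : ℝ} (ht : 1 ≤ t) (hpt : p * t ≤ q)
    (hup : ∀ᵐ ω ∂μ, h ω ≠ 0 → μ[{ω | X ω = 1}.indicator (fun _ => (1 : ℝ)) | m] ω ≤ p)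
    (hdown : ∀ᵐ ω ∂μ, h ω ≠ 0 → q ≤ μ[{ω | X ω = -1}.indicator (fun _ => (1 : ℝ)) | m] ω) :
    ∫ ω, h ω * t ^ X ω ∂μ ≤ ∫ ω, h ω ∂μ := by
  set up := {ω | X ω = 1}
  set down := {ω | X ω = -1}
  have hup_meas : MeasurableSet up := hXm (measurableSet_singleton 1)
  have hdown_meas : MeasurableSet down := hXm (measurableSet_singleton (-1))
  have hdecomp : (fun ω => h ω * t ^ X ω) = fun ω => h ω
      + (t - 1) * (h ω * up.indicator (fun _ => (1 : ℝ)) ω)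
      + (t⁻¹ - 1) * (h ω * down.indicator (fun _ => (1 : ℝ)) ω) := by
    ext ω
    rw [zpow_eq_of_mem_neg_one_zero_one t (hX ω)]
    simp only [Set.indicator_apply, up, down, Set.mem_ofPred_eq]
    ring
  have hint_up := hint.mul_indicator_one hup_meas
  have hint_down := hint.mul_indicator_one hdown_meas
  have hbound_up := integral_mul_indicator_le_of_condExp_le hm hup_meas hh hint hh0 hup
  have hbound_down := le_integral_mul_indicator_of_le_condExp hm hdown_meas hh hint hh0 hdown
  rw [hdecomp, integral_add (by exact hint.add (hint_up.const_mul _)) (hint_down.const_mul _),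
    integral_add hint (hint_up.const_mul _), integral_const_mul, integral_const_mul]
  have hcoef := sub_one_mul_add_inv_sub_one_mul_nonpos ht hpt
  have hh_int0 : 0 ≤ ∫ ω, h ω ∂μ := integral_nonneg hh0
  have ht_inv : t⁻¹ ≤ 1 := inv_le_one_of_one_le₀ ht
  linarith [mul_le_mul_of_nonneg_left hbound_up (sub_nonneg.2 ht),
    mul_le_mul_of_nonpos_left hbound_down (sub_nonpos.2 ht_inv),
    mul_nonpos_of_nonpos_of_nonneg hcoef hh_int0]

theorem integrable_indicator_zpow {Ω : Type*} {m0 : MeasurableSpace Ω} {μ : Measure Ω}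
    [IsFiniteMeasure μ] {B : Set Ω} {X : Ω → ℤ} (hB : MeasurableSet B) (hX : Measurable X)
    {t : ℝ} (ht : 1 ≤ t) {n : ℤ} (hle : ∀ ω ∈ B, X ω ≤ n) :
    Integrable (B.indicator fun ω => t ^ X ω) μ := by
  refine Integrable.of_bound ((Measurable.of_discrete.comp hX).indicator hB).aestronglyMeasurable
    (t ^ n) (ae_of_all _ fun ω => ?_)
  have ht0 : 0 < t := zero_lt_one.trans_le ht
  by_cases hω : ω ∈ B
  · rw [Set.indicator_of_mem hω, Real.norm_of_nonneg (by positivity)]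
    exact zpow_le_zpow_right₀ ht (hle ω hω)
  · rw [Set.indicator_of_notMem hω, norm_zero]
    positivity

section Walk

variable {Ω : Type*}

def stayedInside (E : ℕ → Set Ω) (R : ℕ → Ω → ℤ) (a k : ℕ) : Set Ω :=
  {ω | ∀ i ≤ k, ω ∈ E i ∧ 0 ≤ R i ω ∧ R i ω ≤ (a : ℤ) - 1}

def exitsTopAt (E : ℕ → Set Ω) (R : ℕ → Ω → ℤ) (a k : ℕ) : Set Ω :=
  stayedInside E R a k ∩ {ω | R (k + 1) ω = a}

variable {E : ℕ → Set Ω} {R Y : ℕ → Ω → ℤ} {a : ℕ}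

theorem stayedInside_anti : Antitone (stayedInside E R a) :=
  fun _ _ hkl _ hω i hi => hω i (hi.trans hkl)

theorem disjoint_stayedInside_exitsTopAt {k l : ℕ} (hkl : k < l) :
    Disjoint (stayedInside E R a l) (exitsTopAt E R a k) := by
  refine Set.disjoint_left.2 fun ω hl hk => ?_
  have hbelow := (hl (k + 1) hkl).2.2
  have htop : R (k + 1) ω = a := hk.2
  omega

theorem pairwise_disjoint_exitsTopAt : Pairwise (Function.onFun Disjoint (exitsTopAt E R a)) := by
  intro k l hkl
  rcases Ne.lt_or_gt hkl with h | h
  · exact (disjoint_stayedInside_exitsTopAt h).symm.mono_right Set.inter_subset_left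
  · exact (disjoint_stayedInside_exitsTopAt h).mono_left Set.inter_subset_left

theorem indicator_stayedInside_succ_add_indicator_exitsTopAt_le
    (hRsucc : ∀ k ω, R (k + 1) ω = R k ω + Y (k + 1) ω) {t : ℝ} (ht : 0 < t) (k : ℕ) (ω : Ω) :
    (stayedInside E R a (k + 1)).indicator (fun ω => t ^ R (k + 1) ω) ω
        + (exitsTopAt E R a k).indicator (fun _ => t ^ a) ω
      ≤ (stayedInside E R a k).indicator (fun ω => t ^ R k ω) ω * t ^ Y (k + 1) ω := by
  have hstep : t ^ R (k + 1) ω = t ^ R k ω * t ^ Y (k + 1) ω := by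
    rw [hRsucc, zpow_add₀ ht.ne']
  by_cases hin : ω ∈ stayedInside E R a (k + 1)
  · have hexit : ω ∉ exitsTopAt E R a k :=
      Set.disjoint_left.1 (disjoint_stayedInside_exitsTopAt k.lt_succ_self) hin
    rw [Set.indicator_of_mem hin, Set.indicator_of_notMem hexit,
      Set.indicator_of_mem (stayedInside_anti k.le_succ hin), hstep, add_zero]
  · rw [Set.indicator_of_notMem hin, zero_add]
    by_cases hexit : ω ∈ exitsTopAt E R a k
    · have htop : R (k + 1) ω = a := hexit.2
      rw [Set.indicator_of_mem hexit, Set.indicator_of_mem hexit.1, ← hstep, htop, zpow_natCast]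
    · rw [Set.indicator_of_notMem hexit]
      exact mul_nonneg (Set.indicator_nonneg (fun _ _ => by positivity) ω) (by positivity)

theorem iInter_inter_setOf_reach_subset_iUnion_exitsTopAt (ha : 0 < a)
    (hR0 : ∀ ω, R 0 ω = 0) (hRsucc : ∀ k ω, R (k + 1) ω = R k ω + Y (k + 1) ω)
    (hY : ∀ i ω, Y i ω ∈ ({-1, 0, 1} : Set ℤ)) :
    (⋂ i, E i) ∩ {ω | ∃ k : ℕ, 1 ≤ k ∧ R k ω = (a : ℤ) ∧
      ∀ j : ℕ, 1 ≤ j → j < k → R j ω ≠ -1 ∧ R j ω ≠ (a : ℤ)} ⊆ ⋃ k, exitsTopAt E R a k := by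
  rintro ω ⟨hE, k, hk, hka, hbefore⟩
  have hinside : ∀ j < k, 0 ≤ R j ω ∧ R j ω ≤ (a : ℤ) - 1 := by
    intro j
    induction j with
    | zero => intro; rw [hR0]; omega
    | succ j ih =>
      intro hj
      have hYj : Y (j + 1) ω ∈ ({-1, 0, 1} : Set ℤ) := hY (j + 1) ω
      simp only [Set.mem_insert_iff, Set.mem_singleton_iff] at hYj
      have := hbefore (j + 1) (by omega) hj
      have := ih (by omega)
      have := hRsucc j ω
      omega
  refine Set.mem_iUnion.2 ⟨k - 1, fun i hi => ⟨Set.mem_iInter.1 hE i, hinside i (by omega)⟩, ?_⟩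
  show R (k - 1 + 1) ω = a
  rwa [Nat.sub_add_cancel hk]

variable {m0 : MeasurableSpace Ω}

theorem measurableSet_stayedInside (ℱ : Filtration ℕ m0) (hE : ∀ i, MeasurableSet[ℱ i] (E i))
    (hR : ∀ i, Measurable[ℱ i] (R i)) (k : ℕ) : MeasurableSet[ℱ k] (stayedInside E R a k) := by
  simp only [stayedInside, Set.ofPred_forall]
  refine MeasurableSet.iInter fun i => MeasurableSet.iInter fun hi => ?_
  exact ℱ.mono hi _ ((hE i).inter (hR i (DiscreteMeasurableSpace.forall_measurableSet
    {z | 0 ≤ z ∧ z ≤ (a : ℤ) - 1})))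

variable {P : Measure Ω} {ℱ : Filtration ℕ m0} {p q t : ℝ}

theorem integral_stayedInside_succ_add_le [IsFiniteMeasure P]
    (hE : ∀ i, MeasurableSet[ℱ i] (E i)) (hR : ∀ i, Measurable[ℱ i] (R i))
    (hY : ∀ i ω, Y i ω ∈ ({-1, 0, 1} : Set ℤ)) (hYm : ∀ i, Measurable[ℱ i] (Y i))
    (hRsucc : ∀ k ω, R (k + 1) ω = R k ω + Y (k + 1) ω) (ht : 1 ≤ t) (hpt : p * t ≤ q) (k : ℕ)
    (hup : ∀ᵐ ω ∂P, (ω ∈ E k ∧ 0 ≤ R k ω ∧ R k ω ≤ (a : ℤ) - 1) →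
      P[{ω | Y (k + 1) ω = 1}.indicator (fun _ => (1 : ℝ)) | ℱ k] ω ≤ p)
    (hdown : ∀ᵐ ω ∂P, (ω ∈ E k ∧ 0 ≤ R k ω ∧ R k ω ≤ (a : ℤ) - 1) →
      q ≤ P[{ω | Y (k + 1) ω = -1}.indicator (fun _ => (1 : ℝ)) | ℱ k] ω) :
    ∫ ω, (stayedInside E R a (k + 1)).indicator (fun ω => t ^ R (k + 1) ω) ω ∂P
        + t ^ a * P.real (exitsTopAt E R a k)
      ≤ ∫ ω, (stayedInside E R a k).indicator (fun ω => t ^ R k ω) ω ∂P := by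
  have ht0 : 0 < t := zero_lt_one.trans_le ht
  have hB j : MeasurableSet (stayedInside E R a j) :=
    ℱ.le j _ (measurableSet_stayedInside ℱ hE hR j)
  have hRm j : Measurable (R j) := (hR j).mono (ℱ.le j) le_rfl
  have hYm' : Measurable (Y (k + 1)) := (hYm (k + 1)).mono (ℱ.le _) le_rfl
  set h := (stayedInside E R a k).indicator fun ω => t ^ R k ω
  have hh : StronglyMeasurable[ℱ k] h :=
    (Measurable.of_discrete.comp (hR k)).stronglyMeasurable.indicator
      (measurableSet_stayedInside ℱ hE hR k)
  have hh0 ω : 0 ≤ h ω := Set.indicator_nonneg (fun _ _ => by positivity) ω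
  have hint : Integrable h P :=
    integrable_indicator_zpow (hB k) (hRm k) ht fun ω hω => (hω k le_rfl).2.2
  have hint_next : Integrable ((stayedInside E R a (k + 1)).indicator fun ω => t ^ R (k + 1) ω) P :=
    integrable_indicator_zpow (hB _) (hRm _) ht fun ω hω => (hω (k + 1) le_rfl).2.2
  have hexit_meas : MeasurableSet (exitsTopAt E R a k) :=
    (hB k).inter (measurableSet_eq_fun (hRm _) measurable_const)
  have hint_exit : Integrable ((exitsTopAt E R a k).indicator fun _ => t ^ a) P :=
    (integrable_const _).indicator hexit_meas
  have hint_step : Integrable (fun ω => h ω * t ^ Y (k + 1) ω) P :=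
    hint.mul_bdd (Measurable.of_discrete.comp hYm').aestronglyMeasurable
      (ae_of_all _ fun ω => norm_zpow_le_of_mem_neg_one_zero_one ht (hY (k + 1) ω))
  calc _ = ∫ ω, ((stayedInside E R a (k + 1)).indicator (fun ω => t ^ R (k + 1) ω) ω
        + (exitsTopAt E R a k).indicator (fun _ => t ^ a) ω) ∂P := by
        rw [integral_add hint_next hint_exit, integral_indicator_const _ hexit_meas, smul_eq_mul,
          mul_comm]
    _ ≤ ∫ ω, h ω * t ^ Y (k + 1) ω ∂P := integral_mono (hint_next.add hint_exit) hint_step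
        (indicator_stayedInside_succ_add_indicator_exitsTopAt_le hRsucc ht0 k)
    _ ≤ ∫ ω, h ω ∂P := integral_mul_zpow_le_integral (ℱ.le k) (hY (k + 1)) hYm' hh hint hh0 ht hpt
        (by filter_upwards [hup] with ω hω hne using hω (Set.mem_of_indicator_ne_zero hne k le_rfl))
        (by filter_upwards [hdown] with ω hω hne using
          hω (Set.mem_of_indicator_ne_zero hne k le_rfl))

theorem pow_mul_sum_measureReal_exitsTopAt_le_one [IsProbabilityMeasure P]
    (hE : ∀ i, MeasurableSet[ℱ i] (E i)) (hR : ∀ i, Measurable[ℱ i] (R i))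
    (hY : ∀ i ω, Y i ω ∈ ({-1, 0, 1} : Set ℤ)) (hYm : ∀ i, Measurable[ℱ i] (Y i))
    (hR0 : ∀ ω, R 0 ω = 0) (hRsucc : ∀ k ω, R (k + 1) ω = R k ω + Y (k + 1) ω)
    (ht : 1 ≤ t) (hpt : p * t ≤ q)
    (hup : ∀ k, ∀ᵐ ω ∂P, (ω ∈ E k ∧ 0 ≤ R k ω ∧ R k ω ≤ (a : ℤ) - 1) →
      P[{ω | Y (k + 1) ω = 1}.indicator (fun _ => (1 : ℝ)) | ℱ k] ω ≤ p)
    (hdown : ∀ k, ∀ᵐ ω ∂P, (ω ∈ E k ∧ 0 ≤ R k ω ∧ R k ω ≤ (a : ℤ) - 1) →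
      q ≤ P[{ω | Y (k + 1) ω = -1}.indicator (fun _ => (1 : ℝ)) | ℱ k] ω) (N : ℕ) :
    t ^ a * ∑ k ∈ Finset.range N, P.real (exitsTopAt E R a k) ≤ 1 := by
  set W : ℕ → ℝ := fun k => ∫ ω, (stayedInside E R a k).indicator (fun ω => t ^ R k ω) ω ∂P
  have hW0 : W 0 ≤ 1 := by
    simp only [W, hR0, zpow_zero]
    rw [integral_indicator_const _ (ℱ.le 0 _ (measurableSet_stayedInside ℱ hE hR 0)), smul_eq_mul,
      mul_one]
    exact measureReal_le_one
  have hWN : 0 ≤ W N := integral_nonneg fun ω =>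
    Set.indicator_nonneg (fun _ _ => zpow_nonneg (zero_le_one.trans ht) _) ω
  calc t ^ a * ∑ k ∈ Finset.range N, P.real (exitsTopAt E R a k)
      ≤ ∑ k ∈ Finset.range N, (W k - W (k + 1)) := by
        rw [Finset.mul_sum]
        refine Finset.sum_le_sum fun k _ => ?_
        have := integral_stayedInside_succ_add_le hE hR hY hYm hRsucc ht hpt k (hup k) (hdown k)
        linarith
    _ = W 0 - W N := Finset.sum_range_sub' W N
    _ ≤ 1 := by linarith

theorem measure_iInter_inter_setOf_reach_le [IsProbabilityMeasure P] (ha : 0 < a)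
    (hE : ∀ i, MeasurableSet[ℱ i] (E i)) (hR : ∀ i, Measurable[ℱ i] (R i))
    (hY : ∀ i ω, Y i ω ∈ ({-1, 0, 1} : Set ℤ)) (hYm : ∀ i, Measurable[ℱ i] (Y i))
    (hR0 : ∀ ω, R 0 ω = 0) (hRsucc : ∀ k ω, R (k + 1) ω = R k ω + Y (k + 1) ω)
    (ht : 1 ≤ t) (hpt : p * t ≤ q)
    (hup : ∀ k, ∀ᵐ ω ∂P, (ω ∈ E k ∧ 0 ≤ R k ω ∧ R k ω ≤ (a : ℤ) - 1) →
      P[{ω | Y (k + 1) ω = 1}.indicator (fun _ => (1 : ℝ)) | ℱ k] ω ≤ p)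
    (hdown : ∀ k, ∀ᵐ ω ∂P, (ω ∈ E k ∧ 0 ≤ R k ω ∧ R k ω ≤ (a : ℤ) - 1) →
      q ≤ P[{ω | Y (k + 1) ω = -1}.indicator (fun _ => (1 : ℝ)) | ℱ k] ω) :
    P ((⋂ i, E i) ∩ {ω | ∃ k : ℕ, 1 ≤ k ∧ R k ω = (a : ℤ) ∧
      ∀ j : ℕ, 1 ≤ j → j < k → R j ω ≠ -1 ∧ R j ω ≠ (a : ℤ)}) ≤ ENNReal.ofReal (t⁻¹ ^ a) := by
  have hexit_meas k : MeasurableSet (exitsTopAt E R a k) :=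
    (ℱ.le k _ (measurableSet_stayedInside ℱ hE hR k)).inter
      (measurableSet_eq_fun ((hR (k + 1)).mono (ℱ.le _) le_rfl) measurable_const)
  calc _ ≤ P (⋃ k, exitsTopAt E R a k) :=
        measure_mono (iInter_inter_setOf_reach_subset_iUnion_exitsTopAt ha hR0 hRsucc hY)
    _ = ∑' k, P (exitsTopAt E R a k) := measure_iUnion pairwise_disjoint_exitsTopAt hexit_meas
    _ ≤ ENNReal.ofReal (t⁻¹ ^ a) := by
        refine ENNReal.tsum_le_of_sum_range_le fun N => ?_
        have hsum := pow_mul_sum_measureReal_exitsTopAt_le_one hE hR hY hYm hR0 hRsucc ht hpt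
          hup hdown N
        rw [← ENNReal.ofReal_toReal (ENNReal.sum_ne_top.2 fun k _ => measure_ne_top P _),
          ENNReal.toReal_sum fun k _ => measure_ne_top P _]
        refine ENNReal.ofReal_le_ofReal ?_
        rw [inv_pow, ← one_div, le_div_iff₀ (by positivity), mul_comm]
        simpa only [measureReal_def] using hsum

end Walk

theorem ENNReal.le_ofReal_of_forall_mem_Ioo {x : ENNReal} {f : ℝ → ℝ} {b c : ℝ} (hbc : b < c)
    (hf : ContinuousWithinAt f (Set.Ioi b) b) (h : ∀ y ∈ Set.Ioo b c, x ≤ ENNReal.ofReal (f y)) :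
    x ≤ ENNReal.ofReal (f b) :=
  ge_of_tendsto ((ENNReal.continuous_ofReal.tendsto _).comp hf)
    (Filter.mem_of_superset (Ioo_mem_nhdsGT hbc) h)

theorem drift_walk_crossing_bound_general
    {Ω : Type*} {F : MeasurableSpace Ω} (P : Measure Ω) [IsProbabilityMeasure P]
    (a : ℕ)
    (p q : ℝ) (hp0 : 0 ≤ p) (hpq : p < q)
    (φ : ℕ → MeasurableSpace Ω) (hφ_mono : Monotone φ) (hφ_le : ∀ i, φ i ≤ F)
    (Y : ℕ → Ω → ℤ) (hY_range : ∀ i ω, Y i ω ∈ ({-1, 0, 1} : Set ℤ))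
    (hY_meas : ∀ i, Measurable[φ i] (Y i))
    (E : ℕ → Set Ω) (hE : ∀ i, MeasurableSet[φ i] (E i))
    (R : ℕ → Ω → ℤ)
    (hR : ∀ k ω, R k ω = ∑ i ∈ Finset.Icc 1 k, Y i ω)
    (hup : ∀ i : ℕ, 1 ≤ i →
      ∀ᵐ ω ∂P, (ω ∈ E (i - 1) ∧ 0 ≤ R (i - 1) ω ∧ R (i - 1) ω ≤ (a : ℤ) - 1) →
        (P[Set.indicator {ω' | Y i ω' = 1} (fun _ => (1 : ℝ)) | φ (i - 1)]) ω ≤ p)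
    (hdown : ∀ i : ℕ, 1 ≤ i →
      ∀ᵐ ω ∂P, (ω ∈ E (i - 1) ∧ 0 ≤ R (i - 1) ω ∧ R (i - 1) ω ≤ (a : ℤ) - 1) →
        q ≤ (P[Set.indicator {ω' | Y i ω' = -1} (fun _ => (1 : ℝ)) | φ (i - 1)]) ω)
    (H : Set Ω)
    (hH : H = {ω | ∃ k : ℕ, 1 ≤ k ∧ R k ω = (a : ℤ) ∧
      ∀ j : ℕ, 1 ≤ j → j < k → R j ω ≠ -1 ∧ R j ω ≠ (a : ℤ)}) :
    P ((⋂ i, E i) ∩ H) ≤ ENNReal.ofReal ((p / q) ^ a) := by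
  rcases Nat.eq_zero_or_pos a with rfl | ha
  · simpa using prob_le_one
  let ℱ : Filtration ℕ F := ⟨φ, hφ_mono, hφ_le⟩
  have hR0 ω : R 0 ω = 0 := by simp [hR]
  have hRsucc k ω : R (k + 1) ω = R k ω + Y (k + 1) ω := by
    rw [hR, hR, Finset.sum_Icc_succ_top (by omega)]
  have hRm k : Measurable[φ k] (R k) := by
    rw [funext (hR k)]
    exact Finset.measurable_sum _ fun i hi =>
      (hY_meas i).mono (hφ_mono (Finset.mem_Icc.1 hi).2) le_rfl
  subst hH
  refine ENNReal.le_ofReal_of_forall_mem_Ioo (f := fun x => (x / q) ^ a) hpq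
    (by fun_prop : Continuous _).continuousWithinAt fun p' hp' => ?_
  have hp'0 : 0 < p' := hp0.trans_lt hp'.1
  rw [← inv_div]
  refine measure_iInter_inter_setOf_reach_le (ℱ := ℱ) (p := p) (q := q) ha hE hRm hY_range
    hY_meas hR0 hRsucc ((one_le_div hp'0).2 hp'.2.le) ?_ (fun k => ?_) (fun k => ?_)
  · rw [← mul_div_assoc, div_le_iff₀ hp'0]
    nlinarith [hp'.1, hp'.2]
  · simpa using hup (k + 1) (by omega)
  · simpa using hdown (k + 1) (by omega)

theorem drift_walk_crossing_bound
    {Ω : Type*} {F : MeasurableSpace Ω} (P : Measure Ω) [IsProbabilityMeasure P]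
    (a : ℕ) (ha : 1 ≤ a)
    (p q : ℝ) (hp0 : 0 ≤ p) (hpq : p < q) (hpq1 : p + q ≤ 1)
    (φ : ℕ → MeasurableSpace Ω) (hφ_mono : Monotone φ) (hφ_le : ∀ i, φ i ≤ F)
    (Y : ℕ → Ω → ℤ) (hY_range : ∀ i ω, Y i ω ∈ ({-1, 0, 1} : Set ℤ))
    (hY_meas : ∀ i, Measurable[φ i] (Y i))
    (E : ℕ → Set Ω) (hE : ∀ i, MeasurableSet[φ i] (E i))
    (R : ℕ → Ω → ℤ)
    (hR : ∀ k ω, R k ω = ∑ i ∈ Finset.Icc 1 k, Y i ω)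
    (hup : ∀ i : ℕ, 1 ≤ i →
      ∀ᵐ ω ∂P, (ω ∈ E (i - 1) ∧ 0 ≤ R (i - 1) ω ∧ R (i - 1) ω ≤ (a : ℤ) - 1) →
        (P[Set.indicator {ω' | Y i ω' = 1} (fun _ => (1 : ℝ)) | φ (i - 1)]) ω ≤ p)
    (hdown : ∀ i : ℕ, 1 ≤ i →
      ∀ᵐ ω ∂P, (ω ∈ E (i - 1) ∧ 0 ≤ R (i - 1) ω ∧ R (i - 1) ω ≤ (a : ℤ) - 1) →
        q ≤ (P[Set.indicator {ω' | Y i ω' = -1} (fun _ => (1 : ℝ)) | φ (i - 1)]) ω)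
    (H : Set Ω)
    (hH : H = {ω | ∃ k : ℕ, 1 ≤ k ∧ R k ω = (a : ℤ) ∧
      ∀ j : ℕ, 1 ≤ j → j < k → R j ω ≠ -1 ∧ R j ω ≠ (a : ℤ)}) :
    P ((⋂ i, E i) ∩ H) ≤ ENNReal.ofReal ((p / q) ^ a) :=
  drift_walk_crossing_bound_general P a p q hp0 hpq φ hφ_mono hφ_le Y hY_range hY_meas E hE R hR hup
    hdown H hH
end

section
/- Let n ≥ 2 be an integer, let x, y : Fin n → ℕ, and let i, j be distinct indices in Fin n such that x(i) ≤ x(j), y(j) ≤ y(i), and (x(j) − x(i)) + (y(i) − y(j)) > 0. Define x' : Fin n → ℕ by x'(i) = x(i) + 1 and x'(k) = x(k) for k ≠ i, and define y' : Fin n → ℕ by y'(j) = y(j) + 1 and y'(k) = y(k) for k ≠ j. Then Σ_{k} |x'(k) − y'(k)| ≤ Σ_{k} |x(k) − y(k)|, where the differences are taken in ℤ. -/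
theorem arrival_step_l1_contraction
    (n : ℕ) (hn : 2 ≤ n) (x y : Fin n → ℕ) (i j : Fin n) (hij : i ≠ j)
    (hx : x i ≤ x j) (hy : y j ≤ y i)
    (hpos : ((x j : ℤ) - (x i : ℤ)) + ((y i : ℤ) - (y j : ℤ)) > 0)
    (x' y' : Fin n → ℕ)
    (hx' : x' = Function.update x i (x i + 1))
    (hy' : y' = Function.update y j (y j + 1)) :
    ∑ k, |(x' k : ℤ) - (y' k : ℤ)| ≤ ∑ k, |(x k : ℤ) - (y k : ℤ)| := by
  subst hx' hy'
  have hji : j ∈ Finset.univ.erase i := Finset.mem_erase.2 ⟨Ne.symm hij, Finset.mem_univ j⟩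
  have split : ∀ F : Fin n → ℤ, ∑ k, F k =
      F i + (F j + ∑ k ∈ (Finset.univ.erase i).erase j, F k) := by
    intro F
    rw [Finset.add_sum_erase _ F hji, Finset.add_sum_erase _ F (Finset.mem_univ i)]
  rw [split, split]
  have hrest : ∑ k ∈ (Finset.univ.erase i).erase j,
      |((Function.update x i (x i + 1) k : ℕ) : ℤ) - ((Function.update y j (y j + 1) k : ℕ) : ℤ)| =
      ∑ k ∈ (Finset.univ.erase i).erase j, |((x k : ℕ) : ℤ) - ((y k : ℕ) : ℤ)| := by
    apply Finset.sum_congr rfl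
    intro k hk
    have hk1 := (Finset.mem_erase.1 hk).1
    have hk2 := (Finset.mem_erase.1 (Finset.mem_erase.1 hk).2).1
    simp [Function.update_of_ne hk1, Function.update_of_ne hk2]
  rw [hrest]
  have h1 : Function.update x i (x i + 1) i = x i + 1 := Function.update_self _ _ _
  have h2 : Function.update y j (y j + 1) i = y i := Function.update_of_ne hij _ _
  have h3 : Function.update x i (x i + 1) j = x j := Function.update_of_ne (hij.symm) _ _
  have h4 : Function.update y j (y j + 1) j = y j + 1 := Function.update_self _ _ _
  rw [h1, h2, h3, h4]
  have key : |((x i + 1 : ℕ) : ℤ) - (y i : ℤ)| + |((x j : ℕ) : ℤ) - ((y j + 1 : ℕ) : ℤ)| ≤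
      |(x i : ℤ) - (y i : ℤ)| + |(x j : ℤ) - (y j : ℤ)| := by
    push_cast
    rcases abs_cases ((x i : ℤ) + 1 - y i) with ⟨e1, _⟩ | ⟨e1, _⟩ <;>
    rcases abs_cases ((x j : ℤ) - (y j + 1)) with ⟨e2, _⟩ | ⟨e2, _⟩ <;>
    rcases abs_cases ((x i : ℤ) - y i) with ⟨e3, _⟩ | ⟨e3, _⟩ <;>
    rcases abs_cases ((x j : ℤ) - y j) with ⟨e4, _⟩ | ⟨e4, _⟩ <;>
    omega
  linarith
end

section
/- Let n ≥ 2 be an integer, let x, y : Fin n → ℕ, and let i, j be distinct indices in Fin n such that x(i) ≤ x(j), y(j) ≤ y(i), and (x(j) − x(i)) + (y(i) − y(j)) > 0. Define x' : Fin n → ℕ by x'(i) = x(i) + 1 and x'(k) = x(k) for k ≠ i, and define y' : Fin n → ℕ by y'(j) = y(j) + 1 and y'(k) = y(k) for k ≠ j. Then max_{k} |x'(k) − y'(k)| ≤ max_{k} |x(k) − y(k)|, where the differences are taken in ℤ. -/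
theorem arrival_step_linfty_contraction
    (n : ℕ) (hn : 2 ≤ n) (x y : Fin n → ℕ) (i j : Fin n) (hij : i ≠ j)
    (hx : x i ≤ x j) (hy : y j ≤ y i)
    (hpos : ((x j : ℤ) - (x i : ℤ)) + ((y i : ℤ) - (y j : ℤ)) > 0)
    (x' y' : Fin n → ℕ)
    (hx' : x' = Function.update x i (x i + 1))
    (hy' : y' = Function.update y j (y j + 1)) :
    Finset.univ.sup (fun k => ((x' k : ℤ) - (y' k : ℤ)).natAbs)
      ≤ Finset.univ.sup (fun k => ((x k : ℤ) - (y k : ℤ)).natAbs) := by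
  subst hx' hy'
  apply Finset.sup_le
  intro k _
  have hbi : ((x i : ℤ) - (y i : ℤ)).natAbs ≤
      Finset.univ.sup (fun k => ((x k : ℤ) - (y k : ℤ)).natAbs) :=
    Finset.le_sup (f := fun k => ((x k : ℤ) - (y k : ℤ)).natAbs) (Finset.mem_univ i)
  have hbj : ((x j : ℤ) - (y j : ℤ)).natAbs ≤
      Finset.univ.sup (fun k => ((x k : ℤ) - (y k : ℤ)).natAbs) :=
    Finset.le_sup (f := fun k => ((x k : ℤ) - (y k : ℤ)).natAbs) (Finset.mem_univ j)
  rcases eq_or_ne k i with rfl | hki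
  · simp only [Function.update_self, Function.update_of_ne hij]
    rcases le_or_gt (y k) (x k) with h | h
    · refine le_trans ?_ hbj
      push_cast
      omega
    · refine le_trans ?_ hbi
      push_cast
      omega
  · rcases eq_or_ne k j with rfl | hkj
    · simp only [Function.update_self, Function.update_of_ne hij.symm,
        Function.update_of_ne hki]
      rcases le_or_gt (x k) (y k) with h | h
      · refine le_trans ?_ hbi
        push_cast
        omega
      · refine le_trans ?_ hbj
        push_cast
        omega
    · simp only [Function.update_of_ne hki, Function.update_of_ne hkj]
      exact Finset.le_sup (f := fun k => ((x k : ℤ) - (y k : ℤ)).natAbs) (Finset.mem_univ k)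
end

section
/- Let n, d ≥ 1 be integers, let x, y : Fin n → ℕ satisfy x(k) ≤ y(k) for all k, and let D : Fin d → Fin n be a list of chosen queues. Suppose i = D(a) where a is an index such that x(D(a)) ≤ x(D(l)) for all l and x(D(a)) < x(D(l)) for all l < a (i.e., i is the first shortest chosen queue in x); similarly suppose j = D(b) where b is an index such that y(D(b)) ≤ y(D(l)) for all l and y(D(b)) < y(D(l)) for all l < b. Define x' by adding 1 to coordinate i of x and y' by adding 1 to coordinate j of y. Then x'(k) ≤ y'(k) for all k. -/
theorem arrival_step_order_preservation
    (n d : ℕ) (hn : 1 ≤ n) (hd : 1 ≤ d)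
    (x y : Fin n → ℕ) (hxy : ∀ k, x k ≤ y k)
    (D : Fin d → Fin n) (a b : Fin d) (i j : Fin n)
    (hia : i = D a) (hjb : j = D b)
    (ha_min : ∀ l, x (D a) ≤ x (D l))
    (ha_first : ∀ l, l < a → x (D a) < x (D l))
    (hb_min : ∀ l, y (D b) ≤ y (D l))
    (hb_first : ∀ l, l < b → y (D b) < y (D l))
    (x' y' : Fin n → ℕ)
    (hx' : x' = Function.update x i (x i + 1))
    (hy' : y' = Function.update y j (y j + 1)) :
    ∀ k, x' k ≤ y' k := by
  subst hx' hy'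
  intro k
  by_cases hki : k = i
  · subst hki
    by_cases hkj : k = j
    · subst hkj
      simp [Function.update_self]
      exact hxy k
    · rw [Function.update_self, Function.update_of_ne hkj]
      -- need x i + 1 ≤ y i, i.e. x i < y i
      have h1 : x k ≤ x (D b) := hia ▸ ha_min b
      have h2 : x (D b) ≤ y (D b) := hxy _
      have h3 : y j ≤ y k := by rw [hjb, hia]; exact hb_min a
      have hxiyj : x k ≤ y j := hjb ▸ le_trans h1 h2
      rcases lt_or_eq_of_le (le_trans hxiyj h3) with h | h
      · omega
      · exfalso
        have hij : k ≠ j := hkj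
        have hab : a ≠ b := fun hab => hij (by rw [hia, hjb, hab])
        have h4 : y (D b) = y j := by rw [hjb]
        rcases lt_or_gt_of_ne hab with hlt | hgt
        · have := hb_first a hlt
          rw [← hia] at this
          omega
        · have := ha_first b hgt
          rw [← hia] at this
          omega
  · rw [Function.update_of_ne hki]
    by_cases hkj : k = j
    · subst hkj
      rw [Function.update_self]
      exact le_trans (hxy k) (Nat.le_succ _)
    · rw [Function.update_of_ne hkj]
      exact hxy k
end

section
/- Let 0 < λ < 1 and let m : ℕ → ℕ be any sequence of nonnegative integers. Then (1 − λ^{m(n)+1})^n → 1 as n → ∞ if and only if m(n) − (ln n)/ln(1/λ) → +∞ as n → ∞. -/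
open Filter

private lemma aux_pow_iff (a : ℕ → ℝ) (h0 : ∀ n, 0 < a n) (h1 : ∀ n, a n < 1) :
    Tendsto (fun n : ℕ => (1 - a n) ^ n) atTop (nhds 1) ↔
    Tendsto (fun n : ℕ => (n : ℝ) * a n) atTop (nhds 0) := by
  have hb : ∀ n, 0 < 1 - a n := fun n => by linarith [h1 n]
  constructor
  · intro h
    have h1a : Tendsto (fun n : ℕ => 1 - a n) atTop (nhds 1) := by
      refine tendsto_of_tendsto_of_tendsto_of_le_of_le' h tendsto_const_nhds ?_ ?_
      · filter_upwards [eventually_ge_atTop 1] with n hn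
        calc (1 - a n) ^ n ≤ (1 - a n) ^ 1 :=
              pow_le_pow_of_le_one (hb n).le (by linarith [h0 n]) hn
          _ = 1 - a n := pow_one _
      · exact Eventually.of_forall fun n => by linarith [h0 n]
    have hlog : Tendsto (fun n : ℕ => -((n : ℝ) * Real.log (1 - a n))) atTop (nhds 0) := by
      have h2 := h.log one_ne_zero
      simp only [Real.log_pow, Real.log_one] at h2
      simpa using h2.neg
    refine tendsto_of_tendsto_of_tendsto_of_le_of_le' tendsto_const_nhds hlog ?_ ?_
    · exact Eventually.of_forall fun n => mul_nonneg (Nat.cast_nonneg n) (h0 n).le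
    · refine Eventually.of_forall fun n => ?_
      have hle : Real.log (1 - a n) ≤ -a n := by
        have := Real.log_le_sub_one_of_pos (hb n)
        linarith
      have h3 : (n : ℝ) * Real.log (1 - a n) ≤ (n : ℝ) * (-a n) :=
        mul_le_mul_of_nonneg_left hle (Nat.cast_nonneg n)
      linarith
  · intro h
    have hlow : Tendsto (fun n : ℕ => 1 - (n : ℝ) * a n) atTop (nhds 1) := by
      simpa using (tendsto_const_nhds (x := (1 : ℝ)) (f := atTop)).sub h
    refine tendsto_of_tendsto_of_tendsto_of_le_of_le' hlow tendsto_const_nhds ?_ ?_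
    · refine Eventually.of_forall fun n => ?_
      have hber := one_add_mul_le_pow (a := -a n) (by linarith [h1 n]) n
      have e : (1 : ℝ) + -a n = 1 - a n := by ring
      rw [e] at hber
      linarith
    · exact Eventually.of_forall fun n => pow_le_one₀ (hb n).le (by linarith [h0 n])

theorem geometric_max_upper_threshold
    (lam : ℝ) (hlam0 : 0 < lam) (hlam1 : lam < 1) (m : ℕ → ℕ) :
    Tendsto (fun n : ℕ => (1 - lam ^ (m n + 1)) ^ n) atTop (nhds 1) ↔
      Tendsto (fun n : ℕ => (m n : ℝ) - Real.log n / Real.log (1 / lam)) atTop atTop := by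
  set L := Real.log (1 / lam) with hLdef
  have hL : 0 < L := Real.log_pos (one_lt_one_div hlam0 hlam1)
  have hlne : Real.log lam ≠ 0 := (Real.log_neg hlam0 hlam1).ne
  have hLlam : L = -Real.log lam := by
    rw [hLdef, Real.log_div one_ne_zero hlam0.ne', Real.log_one, zero_sub]
  set a : ℕ → ℝ := fun n => lam ^ (m n + 1) with ha
  have ha0 : ∀ n, 0 < a n := fun n => pow_pos hlam0 _
  have ha1 : ∀ n, a n < 1 := fun n => pow_lt_one₀ hlam0.le hlam1 (Nat.succ_ne_zero _)
  set g : ℕ → ℝ := fun n => (m n : ℝ) - Real.log n / L with hg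
  rw [aux_pow_iff a ha0 ha1]
  have key : ∀ᶠ n : ℕ in atTop,
      (n : ℝ) * a n = Real.exp (-(L * (g n + 1))) := by
    filter_upwards [eventually_ge_atTop 1] with n hn
    have hn0 : (0 : ℝ) < n := by exact_mod_cast hn
    rw [← Real.exp_log (mul_pos hn0 (ha0 n)), Real.log_mul hn0.ne' (ha0 n).ne']
    congr 1
    have hla : Real.log (a n) = ((m n : ℝ) + 1) * Real.log lam := by
      rw [ha]
      simp only [Real.log_pow]
      push_cast
      ring
    rw [hla, hg, hLlam]
    field_simp [hlne]
    ring
  rw [tendsto_congr' key, Real.tendsto_exp_comp_nhds_zero]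
  have hiff : Tendsto (fun n => L * (g n + 1)) atTop atTop ↔ Tendsto g atTop atTop := by
    constructor
    · intro h
      have h3 : Tendsto (fun n => L⁻¹ * (L * (g n + 1))) atTop atTop :=
        h.const_mul_atTop (inv_pos.mpr hL)
      have h4 : Tendsto (fun n => g n + 1) atTop atTop := by
        refine h3.congr fun n => ?_
        field_simp
      simpa using tendsto_atTop_add_const_right _ (-1 : ℝ) h4
    · intro h
      exact (tendsto_atTop_add_const_right _ 1 h).const_mul_atTop hL
  rw [tendsto_neg_atBot_iff, hiff]
end

section
/- Let 0 < λ < 1 be real and let d ≥ 1 be an integer. Then there exists a constant C > 0 (depending only on λ and d) such that the following holds: for every real ε ≥ 0 and every sequence u : ℕ → ℝ satisfying u(0) = 1, 0 ≤ u(i) ≤ λ^i for every i ≥ 0, and |u(i+1) − λ·u(i)^d| ≤ ε for every i ≥ 0, one has |u(i) − λ^{(1 + d + d² + ⋯ + d^{i−1})}| ≤ C·ε for every i ≥ 0, where the exponent 1 + d + ⋯ + d^{i−1} denotes Σ_{j=0}^{i−1} d^j (and equals 0 when i = 0). -/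
/-!
Write `v i = λ ^ (1 + d + ⋯ + d ^ (i - 1))`, so that `v (i + 1) = λ * v i ^ d` exactly, and let
`e i = |u i - v i|`. Since `u i` and `v i` both lie in `[0, λ ^ i]`, the mean value bound for
`x ↦ x ^ d` gives the perturbed linear recursion `e (i + 1) ≤ ε + a i * e i` with
`a i = d * λ * (λ ^ i) ^ (d - 1)`. The coefficients are bounded by `d`, and from some index `N` on
they are at most some `q < 1` (for `d = 1` they are the constant `λ`, for `d ≥ 2` they tend to `0`).
Hence `e` grows at most geometrically up to `N`, and afterwards the contraction keeps it below
`e N + ε / (1 - q)`.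
-/

open Filter Finset

section PerturbedLinearRecursion

variable {e : ℕ → ℝ} {ε : ℝ}

theorem le_geom_sum_mul_of_le_add_mul {A : ℝ} (hA : 0 ≤ A) (he0 : e 0 = 0)
    (h : ∀ n, e (n + 1) ≤ ε + A * e n) (n : ℕ) :
    e n ≤ (∑ j ∈ range n, A ^ j) * ε := by
  induction n with
  | zero => simp [he0]
  | succ n ih =>
    calc e (n + 1) ≤ ε + A * ((∑ j ∈ range n, A ^ j) * ε) := (h n).trans (by gcongr)
      _ = (∑ j ∈ range (n + 1), A ^ j) * ε := by rw [geom_sum_succ]; ring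

theorem le_of_le_add_mul_of_ge {q M : ℝ} {N : ℕ} (hq : 0 ≤ q) (hε : ε ≤ (1 - q) * M)
    (heN : e N ≤ M) (h : ∀ n ≥ N, e (n + 1) ≤ ε + q * e n) :
    ∀ n ≥ N, e n ≤ M := by
  intro n hn
  induction n, hn using Nat.le_induction with
  | base => exact heN
  | succ n hn ih =>
    calc e (n + 1) ≤ ε + q * M := (h n hn).trans (by gcongr)
      _ ≤ M := by linarith

theorem exists_bound_of_le_add_mul {a : ℕ → ℝ} {A q : ℝ} (ha0 : ∀ n, 0 ≤ a n)
    (haA : ∀ n, a n ≤ A) (hq : q < 1) (haq : ∀ᶠ n in atTop, a n ≤ q) :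
    ∃ C > 0, ∀ ε, 0 ≤ ε → ∀ e : ℕ → ℝ, e 0 = 0 → (∀ n, 0 ≤ e n) →
      (∀ n, e (n + 1) ≤ ε + a n * e n) → ∀ n, e n ≤ C * ε := by
  obtain ⟨N, hN⟩ := eventually_atTop.mp haq
  have hq0 : 0 ≤ q := (ha0 N).trans (hN N le_rfl)
  have hA : 0 ≤ A := (ha0 0).trans (haA 0)
  set K := ∑ j ∈ range N, A ^ j
  have hq' : 0 < 1 - q := sub_pos.mpr hq
  refine ⟨K + (1 - q)⁻¹, by positivity, fun ε hε e he0 he h n => ?_⟩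
  have hgeom := le_geom_sum_mul_of_le_add_mul hA he0
    fun n => (h n).trans (by gcongr; exacts [he n, haA n])
  have hle_N : ∀ n ≤ N, e n ≤ K * ε := fun n hn =>
    (hgeom n).trans <| mul_le_mul_of_nonneg_right
      (sum_le_sum_of_subset_of_nonneg (range_mono hn) fun j _ _ => pow_nonneg hA j) hε
  rcases le_total n N with hn | hn
  · exact (hle_N n hn).trans (by gcongr; exact le_add_of_nonneg_right (by positivity))
  refine le_of_le_add_mul_of_ge (ε := ε) hq0 ?_ ?_ (fun n hn => (h n).trans ?_) n hn
  · have hsplit : (1 - q) * ((K + (1 - q)⁻¹) * ε) = (1 - q) * K * ε + ε := by field_simp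
    rw [hsplit]
    exact le_add_of_nonneg_left (by positivity)
  · exact (hle_N N le_rfl).trans (by gcongr; exact le_add_of_nonneg_right (by positivity))
  · gcongr; exacts [he n, hN n hn]

end PerturbedLinearRecursion

theorem abs_sub_mul_pow_le_add {lam x y M x' ε : ℝ} {d : ℕ} (hlam : 0 ≤ lam) (hx : |x| ≤ M)
    (hy : |y| ≤ M) (h : |x' - lam * x ^ d| ≤ ε) :
    |x' - lam * y ^ d| ≤ ε + d * lam * M ^ (d - 1) * |x - y| := by
  have hmax : max |x| |y| ^ (d - 1) ≤ M ^ (d - 1) :=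
    pow_le_pow_left₀ (le_max_of_le_left (abs_nonneg x)) (max_le hx hy) _
  calc |x' - lam * y ^ d| = |(x' - lam * x ^ d) + lam * (x ^ d - y ^ d)| := by ring_nf
    _ ≤ |x' - lam * x ^ d| + lam * |x ^ d - y ^ d| :=
      (abs_add_le _ _).trans_eq (by rw [abs_mul, abs_of_nonneg hlam])
    _ ≤ ε + lam * (|x - y| * d * M ^ (d - 1)) := by
      gcongr; exact (abs_pow_sub_pow_le ..).trans (by rw [mul_assoc, mul_assoc]; gcongr)
    _ = ε + d * lam * M ^ (d - 1) * |x - y| := by ring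

theorem pow_geom_sum_succ (lam : ℝ) (d i : ℕ) :
    lam ^ (∑ j ∈ range (i + 1), d ^ j) = lam * (lam ^ ∑ j ∈ range i, d ^ j) ^ d := by
  rw [geom_sum_succ, pow_succ, pow_mul', mul_comm]

theorem pow_geom_sum_le_pow {lam : ℝ} (h0 : 0 ≤ lam) (h1 : lam ≤ 1) {d : ℕ} (hd : 1 ≤ d)
    (i : ℕ) :
    lam ^ (∑ j ∈ range i, d ^ j) ≤ lam ^ i :=
  pow_le_pow_of_le_one h0 h1 <| by
    simpa using sum_le_sum fun j (_ : j ∈ range i) => Nat.one_le_pow j d hd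

theorem exists_lt_one_eventually_mul_pow_pow_le {lam : ℝ} (h0 : 0 ≤ lam) (h1 : lam < 1)
    (d : ℕ) :
    ∃ q < 1, ∀ᶠ i in atTop, d * lam * (lam ^ i) ^ (d - 1) ≤ q := by
  rcases Nat.lt_or_ge d 2 with hd | hd
  · refine ⟨lam, h1, Eventually.of_forall fun i => ?_⟩
    interval_cases d <;> simp [h0]
  have hlim : Tendsto (fun i => d * lam * (lam ^ (d - 1)) ^ i) atTop (nhds (d * lam * 0)) :=
    (tendsto_pow_atTop_nhds_zero_of_lt_one (by positivity)
      (pow_lt_one₀ h0 h1 (by omega))).const_mul _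
  have hsmall := hlim.eventually (ge_mem_nhds (show d * lam * 0 < (1 / 2 : ℝ) by norm_num))
  refine ⟨1 / 2, by norm_num, hsmall.mono fun i hi => ?_⟩
  rwa [← pow_mul, mul_comm i, pow_mul]

theorem balance_recursion_stability
    (lam : ℝ) (hlam0 : 0 < lam) (hlam1 : lam < 1) (d : ℕ) (hd : 1 ≤ d) :
    ∃ C > (0 : ℝ), ∀ ε : ℝ, 0 ≤ ε → ∀ u : ℕ → ℝ, u 0 = 1 →
      (∀ i, 0 ≤ u i ∧ u i ≤ lam ^ i) →
      (∀ i, |u (i + 1) - lam * (u i) ^ d| ≤ ε) →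
      ∀ i, |u i - lam ^ (∑ j ∈ Finset.range i, d ^ j)| ≤ C * ε := by
  obtain ⟨q, hq, haq⟩ := exists_lt_one_eventually_mul_pow_pow_le hlam0.le hlam1 d
  have ha : ∀ i, d * lam * (lam ^ i) ^ (d - 1) ≤ d := fun i => by
    rw [mul_assoc]
    exact mul_le_of_le_one_right (by positivity) (mul_le_one₀ hlam1.le (by positivity)
      (pow_le_one₀ (by positivity) (pow_le_one₀ hlam0.le hlam1.le)))
  obtain ⟨C, hC, hbound⟩ := exists_bound_of_le_add_mul (fun i => by positivity) ha hq haq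
  refine ⟨C, hC, fun ε hε u hu0 hu hrec =>
    hbound ε hε _ (by simp [hu0]) (fun _ => abs_nonneg _) fun i => ?_⟩
  rw [pow_geom_sum_succ]
  exact abs_sub_mul_pow_le_add hlam0.le (by rw [abs_of_nonneg (hu i).1]; exact (hu i).2)
    (by rw [abs_of_nonneg (by positivity)]; exact pow_geom_sum_le_pow hlam0.le hlam1.le hd i)
    (hrec i)
end
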